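/- For every α ∈ [0,1], the set Γ ∪ P, where P := {(0, t) ∈ ℝ² : t ≥ 0} is the vertical half-line, is α-sliding minimal (with n = 2, d = 1) in the half-plane ℝ²₊ with sliding boundary Γ. -/

import Mathlib

/-!
A competitor is `F = f '' E` for a map `f` continuous on `E = Γ ∪ P`, preserving `Γ` and equal to
the identity outside a ball. The connected set `f '' Γ ⊆ Γ` contains points of `Γ` far out on both
sides, hence all of `Γ`; so neither `E \ F` nor `F \ E` meets `Γ`, and both sides of the
inequality are plain `H¹` measures. Then `E \ F ⊆ P`, and every height `t > 0` is attained by the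
connected set `f '' P`, which joins `f 0 ∈ Γ` to fixed points of `P` above height `t`; a point of
`f '' P` at the height of a point of `E \ F` lies outside `E`. The height coordinate is an isometry
on `P` and `1`-Lipschitz on the plane, whence `H¹(E \ F) ≤ H¹(F \ E)`.
-/

open MeasureTheory Set

noncomputable section

/-- The functional `J_α(E) = H^d(E \ Γ) + α · H^d(E ∩ Γ)`. -/
def slidingJ (n : ℕ) (d α : ℝ) (G E : Set (EuclideanSpace ℝ (Fin n))) : ENNReal :=
  μH[d] (E \ G) + ENNReal.ofReal α * μH[d] (E ∩ G)

/-- `F` is a sliding competitor of `E` in `Ω` with sliding boundary `G`: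
`F = φ₁(E)` for a continuous one-parameter family `φ : [0,1] × E → Ω` with `φ₀ = id`,
`φ₁` Lipschitz, preserving `G`, and whose moving part is confined to a compact set. -/
def IsSlidingCompetitor (n : ℕ) (Ω G E F : Set (EuclideanSpace ℝ (Fin n))) : Prop :=
  ∃ φ : ℝ → EuclideanSpace ℝ (Fin n) → EuclideanSpace ℝ (Fin n),
    ContinuousOn (fun q : ℝ × EuclideanSpace ℝ (Fin n) => φ q.1 q.2) (Icc (0:ℝ) 1 ×ˢ E) ∧
    (∀ x ∈ E, φ 0 x = x) ∧
    (∃ L : NNReal, LipschitzOnWith L (φ 1) E) ∧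
    (∀ t ∈ Icc (0:ℝ) 1, ∀ x ∈ E, φ t x ∈ Ω) ∧
    (∀ t ∈ Icc (0:ℝ) 1, ∀ x ∈ E ∩ G, φ t x ∈ G) ∧
    (∃ K : Set (EuclideanSpace ℝ (Fin n)), IsCompact K ∧
       ∀ t ∈ Icc (0:ℝ) 1, ∀ x ∈ E, (∃ s ∈ Icc (0:ℝ) 1, φ s x ≠ x) → φ t x ∈ K) ∧
    F = φ 1 '' E

/-- `E ⊆ Ω` is `α`-sliding minimal of dimension `d` in `Ω` with sliding boundary `G`:
`J_α(E \ F) ≤ J_α(F \ E)` for every sliding competitor `F` of `E`. -/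
def SlidingMinimal (n : ℕ) (d α : ℝ) (Ω G E : Set (EuclideanSpace ℝ (Fin n))) : Prop :=
  ∀ F : Set (EuclideanSpace ℝ (Fin n)), IsSlidingCompetitor n Ω G E F →
    slidingJ n d α G (E \ F) ≤ slidingJ n d α G (F \ E)

/-- The cone over a set: `cone(A) = {λ a : λ ≥ 0, a ∈ A}`. -/
def coneOver (n : ℕ) (A : Set (EuclideanSpace ℝ (Fin n))) : Set (EuclideanSpace ℝ (Fin n)) :=
  {x | ∃ lam : ℝ, 0 ≤ lam ∧ ∃ a ∈ A, x = lam • a}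

/-- The point of `ℝ²` with coordinates `(a, b)`. -/
def e2 (a b : ℝ) : EuclideanSpace ℝ (Fin 2) := (EuclideanSpace.equiv (Fin 2) ℝ).symm ![a, b]

/-- The sliding boundary `Γ = {y = 0}` of the half-plane. -/
def Gamma2 : Set (EuclideanSpace ℝ (Fin 2)) := {x | x 1 = 0}

/-- The closed upper half-plane `ℝ²₊ = {y ≥ 0}`. -/
def halfPlane : Set (EuclideanSpace ℝ (Fin 2)) := {x | 0 ≤ x 1}

/-- The vertical half-line `P = {(0, t) : t ≥ 0}`. -/
def vertHalfLine : Set (EuclideanSpace ℝ (Fin 2)) := {p | ∃ t : ℝ, 0 ≤ t ∧ p = e2 0 t}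

/-- The cone of type (iv): the union of the half-line `{(t,0) : t ≤ 0}` lying on `Γ`
with the half-line from the origin making angle `θ_α = arccos α` with `Γ`. -/
def Dcone (α : ℝ) : Set (EuclideanSpace ℝ (Fin 2)) :=
  {p | ∃ t : ℝ, t ≤ 0 ∧ p = e2 t 0} ∪
  {p | ∃ t : ℝ, 0 ≤ t ∧ p = t • e2 (Real.cos (Real.arccos α)) (Real.sin (Real.arccos α))}

/-- The cone `V_θ`: two half-lines from the origin, symmetric with respect to the
vertical axis, each making angle `θ` with `Γ`. -/
def Vcone (θ : ℝ) : Set (EuclideanSpace ℝ (Fin 2)) :=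
  {p | ∃ t : ℝ, 0 ≤ t ∧ p = t • e2 (Real.cos θ) (Real.sin θ)} ∪
  {p | ∃ t : ℝ, 0 ≤ t ∧ p = t • e2 (-Real.cos θ) (Real.sin θ)}

/-- The reflection `(x, y) ↦ (−x, y)`. -/
def refl2 (p : EuclideanSpace ℝ (Fin 2)) : EuclideanSpace ℝ (Fin 2) :=
  e2 (-(p 0)) (p 1)

local notation "ℝ²" => EuclideanSpace ℝ (Fin 2)

lemma slidingJ_eq_of_disjoint {n : ℕ} {d α : ℝ} {G A : Set (EuclideanSpace ℝ (Fin n))}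
    (h : Disjoint A G) : slidingJ n d α G A = μH[d] A := by
  simp [slidingJ, h.sdiff_eq_left, h.inter_eq]

theorem IsSlidingCompetitor.exists_image_eq {n : ℕ} {Ω G E F : Set (EuclideanSpace ℝ (Fin n))}
    (h : IsSlidingCompetitor n Ω G E F) :
    ∃ f : EuclideanSpace ℝ (Fin n) → EuclideanSpace ℝ (Fin n), ∃ R : ℝ,
      ContinuousOn f E ∧ MapsTo f (E ∩ G) G ∧ (∀ x ∈ E, R < ‖x‖ → f x = x) ∧ F = f '' E := by
  obtain ⟨φ, -, hφ0, ⟨L, hL⟩, -, hφG, ⟨K, hK, hφK⟩, rfl⟩ := h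
  obtain ⟨R, hR⟩ := hK.isBounded.subset_closedBall 0
  have h1 : (1 : ℝ) ∈ Icc (0 : ℝ) 1 := right_mem_Icc.2 zero_le_one
  refine ⟨φ 1, R, hL.continuousOn, fun x hx => hφG 1 h1 x hx, fun x hx hRx => ?_, rfl⟩
  by_contra hmove
  have hxK : x ∈ K := hφ0 x hx ▸ hφK 0 (left_mem_Icc.2 zero_le_one) x hx ⟨1, h1, hmove⟩
  exact (mem_closedBall_zero_iff.1 (hR hxK)).not_gt hRx

lemma lipschitzWith_euclideanSpace_apply {ι : Type*} [Fintype ι] (i : ι) :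
    LipschitzWith 1 (fun x : EuclideanSpace ℝ ι => x i) :=
  LipschitzWith.of_dist_le_mul fun x y => by simpa using PiLp.dist_apply_le x y i

lemma lt_norm_of_lt_abs_apply {ι : Type*} [Fintype ι] {x : EuclideanSpace ℝ ι} {i : ι} {R : ℝ}
    (h : R < |x i|) : R < ‖x‖ :=
  h.trans_le (PiLp.norm_apply_le x i)

@[simp] lemma e2_apply_zero (a b : ℝ) : e2 a b 0 = a := rfl

@[simp] lemma e2_apply_one (a b : ℝ) : e2 a b 1 = b := rfl

lemma e2_apply_self (x : ℝ²) : e2 (x 0) (x 1) = x := by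
  ext i; fin_cases i <;> rfl

lemma e2_zero_eq_single (t : ℝ) : e2 0 t = PiLp.single 2 1 t := by
  ext i; fin_cases i <;> rfl

lemma isometry_e2_zero : Isometry (e2 0) :=
  Isometry.of_dist_eq fun s t => by simp only [e2_zero_eq_single, PiLp.dist_single_same]

lemma vertHalfLine_eq_image : vertHalfLine = e2 0 '' Ici 0 := by
  ext p; simp [vertHalfLine, eq_comm]

lemma hausdorffMeasure_eq_of_subset_vertHalfLine {d : ℝ} (hd : 0 ≤ d) {A : Set ℝ²}
    (hA : A ⊆ vertHalfLine) : μH[d] A = μH[d] ((· 1) '' A) := by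
  have hA' : e2 0 '' ((· 1) '' A) = A := by
    rw [image_image]
    refine (image_congr fun x hx => ?_).trans (image_id A)
    obtain ⟨t, -, rfl⟩ := hA hx
    rfl
  rw [← isometry_e2_zero.hausdorffMeasure_image (Or.inl hd), hA']

lemma IsPreconnected.exists_apply_eq {ι : Type*} [Fintype ι] {S : Set (EuclideanSpace ℝ ι)}
    (hS : IsPreconnected S) (i : ι) {p q : EuclideanSpace ℝ ι} (hp : p ∈ S) (hq : q ∈ S)
    {t : ℝ} (ht : t ∈ Icc (p i) (q i)) : ∃ y ∈ S, y i = t :=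
  (hS.image _ (lipschitzWith_euclideanSpace_apply i).continuous.continuousOn).Icc_subset
    (mem_image_of_mem _ hp) (mem_image_of_mem _ hq) ht

lemma convex_Gamma2 : Convex ℝ Gamma2 :=
  convex_hyperplane (EuclideanSpace.proj (𝕜 := ℝ) (1 : Fin 2)).isLinear 0

lemma isPreconnected_vertHalfLine : IsPreconnected vertHalfLine := by
  rw [vertHalfLine_eq_image]
  exact isPreconnected_Ici.image _ isometry_e2_zero.continuous.continuousOn

section PlanarDeformation

variable {f : ℝ² → ℝ²} {R : ℝ}

lemma Gamma2_subset_image (hf : ContinuousOn f Gamma2) (hmaps : MapsTo f Gamma2 Gamma2)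
    (hfix : ∀ x ∈ Gamma2, R < ‖x‖ → f x = x) : Gamma2 ⊆ f '' Gamma2 := by
  intro g hg
  set r := |g 0| + |R| + 1
  have hfix_end : ∀ a, |a| = r → f (e2 a 0) = e2 a 0 := fun a ha =>
    hfix _ rfl (lt_norm_of_lt_abs_apply (i := 0) (by
      simp only [e2_apply_zero, ha, r]; linarith [le_abs_self R, abs_nonneg (g 0)]))
  have hr : 0 ≤ r := by positivity
  have hg0 : g 0 ∈ Icc (f (e2 (-r) 0) 0) (f (e2 r 0) 0) := by
    rw [hfix_end (-r) (by rw [abs_neg, abs_of_nonneg hr]), hfix_end r (abs_of_nonneg hr)]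
    exact abs_le.1 (by linarith [abs_nonneg R])
  obtain ⟨_, ⟨x, hx, rfl⟩, hx0⟩ := (convex_Gamma2.isPreconnected.image f hf).exists_apply_eq 0
    (mem_image_of_mem f rfl) (mem_image_of_mem f rfl) hg0
  refine ⟨x, hx, ?_⟩
  rw [← e2_apply_self (f x), ← e2_apply_self g, hx0, hmaps hx, hg]

lemma exists_mem_image_vertHalfLine_apply_one_eq (hf : ContinuousOn f vertHalfLine)
    (h0 : f (e2 0 0) ∈ Gamma2) (hfix : ∀ x ∈ vertHalfLine, R < ‖x‖ → f x = x) {t : ℝ}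
    (ht : 0 ≤ t) : ∃ q ∈ f '' vertHalfLine, q 1 = t := by
  set r := t + |R| + 1
  have hfix_end : f (e2 0 r) = e2 0 r := hfix _ ⟨r, by positivity, rfl⟩
    (lt_norm_of_lt_abs_apply (i := 1) (by
      simp only [e2_apply_one, r]; linarith [le_abs_self R, le_abs_self (t + |R| + 1)]))
  have ht' : t ∈ Icc (f (e2 0 0) 1) (f (e2 0 r) 1) := by
    rw [h0, hfix_end, e2_apply_one]
    constructor <;> linarith [abs_nonneg R]
  exact (isPreconnected_vertHalfLine.image f hf).exists_apply_eq 1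
    (mem_image_of_mem f ⟨0, le_rfl, rfl⟩) (mem_image_of_mem f ⟨r, by positivity, rfl⟩) ht'

lemma apply_one_image_diff_subset (hf : ContinuousOn f vertHalfLine) (h0 : f (e2 0 0) ∈ Gamma2)
    (hfix : ∀ x ∈ vertHalfLine, R < ‖x‖ → f x = x)
    (hΓ : Gamma2 ⊆ f '' (Gamma2 ∪ vertHalfLine)) :
    (· 1) '' ((Gamma2 ∪ vertHalfLine) \ f '' (Gamma2 ∪ vertHalfLine)) ⊆
      (· 1) '' (f '' (Gamma2 ∪ vertHalfLine) \ (Gamma2 ∪ vertHalfLine)) := by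
  rintro _ ⟨x, ⟨hxE, hxF⟩, rfl⟩
  have hxΓ : x ∉ Gamma2 := fun h => hxF (hΓ h)
  obtain ⟨t, ht, rfl⟩ : x ∈ vertHalfLine := hxE.resolve_left hxΓ
  obtain ⟨q, hq, hqt⟩ := exists_mem_image_vertHalfLine_apply_one_eq hf h0 hfix ht
  refine ⟨q, ⟨image_mono subset_union_right hq, ?_⟩, hqt⟩
  rintro (hqΓ | ⟨s, -, rfl⟩)
  · exact hxΓ (hqt ▸ hqΓ)
  · rw [e2_apply_one] at hqt
    exact hxF (hqt ▸ image_mono subset_union_right hq)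

end PlanarDeformation

theorem gammaUnionVert_slidingMinimal_general (α : ℝ) :
    SlidingMinimal 2 1 α halfPlane Gamma2 (Gamma2 ∪ vertHalfLine) := by
  intro F hF
  obtain ⟨f, R, hf, hmaps, hfix, rfl⟩ := hF.exists_image_eq
  set E := Gamma2 ∪ vertHalfLine
  have hΓE : Gamma2 ⊆ E := subset_union_left
  have hPE : vertHalfLine ⊆ E := subset_union_right
  have hΓF : Gamma2 ⊆ f '' E :=
    (Gamma2_subset_image (hf.mono hΓE) (fun x hx => hmaps ⟨hΓE hx, hx⟩)
      fun x hx => hfix x (hΓE hx)).trans (image_mono hΓE)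
  have hheights := apply_one_image_diff_subset (hf.mono hPE) (hmaps ⟨hPE ⟨0, le_rfl, rfl⟩, rfl⟩)
    (fun x hx => hfix x (hPE hx)) hΓF
  have hAP : E \ f '' E ⊆ vertHalfLine := fun x hx => hx.1.resolve_left fun h => hx.2 (hΓF h)
  rw [slidingJ_eq_of_disjoint (disjoint_sdiff_left.mono_right hΓF),
    slidingJ_eq_of_disjoint (disjoint_sdiff_left.mono_right hΓE)]
  calc μH[1] (E \ f '' E) = μH[1] ((· 1) '' (E \ f '' E)) :=
        hausdorffMeasure_eq_of_subset_vertHalfLine zero_le_one hAP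
    _ ≤ μH[1] ((· 1) '' (f '' E \ E)) := measure_mono hheights
    _ ≤ μH[1] (f '' E \ E) := by
        simpa using
          (lipschitzWith_euclideanSpace_apply (1 : Fin 2)).hausdorffMeasure_image_le zero_le_one _

/-- For every `α ∈ [0,1]`, the set `Γ ∪ P`, where `P = {(0,t) : t ≥ 0}` is the vertical
half-line, is `α`-sliding minimal (n = 2, d = 1) in the half-plane `ℝ²₊` with sliding
boundary `Γ`. -/
theorem gammaUnionVert_slidingMinimal (α : ℝ) (hα : α ∈ Icc (0:ℝ) 1) :
    SlidingMinimal 2 1 α halfPlane Gamma2 (Gamma2 ∪ vertHalfLine) :=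
  gammaUnionVert_slidingMinimal_general α
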